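/- arXiv:1109.0417 — 2 statements merged into one kernel-verified Lean document; each statement's English description precedes it below -/
import Mathlib

section
/- Fix distinct elements a_1, ..., a_t, b of [n] with n ≥ t+2. Let Q(a_i,b) be the set partition of [n] consisting of the block {a_i, b} together with singletons {j} for all j ∈ [n] \ {a_i, b}, and let H = { P a set partition of [n] : {a_1}, ..., {a_t} ∈ P and {c} ∈ P for some c ∉ {a_1,...,a_t,b} } ∪ { Q(a_1,b), ..., Q(a_t,b) }. Then |H| = B_{n-t} − B̃_{n-t} − B̃_{n-t-1} + t. -/
/-- A set partition of `Fin n`, modelled as a finite set of blocks. -/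
def IsSetPartition {n : ℕ} (P : Finset (Finset (Fin n))) : Prop :=
  (∀ b ∈ P, b.Nonempty) ∧ (∀ b ∈ P, ∀ c ∈ P, b ≠ c → Disjoint b c) ∧
    P.sup id = Finset.univ

/-- The `n`-th Bell number: the number of set partitions of an `n`-element set. -/
noncomputable def bell (n : ℕ) : ℕ :=
  Set.ncard {P : Finset (Finset (Fin n)) | IsSetPartition P}

/-- The number of singleton-free set partitions of an `n`-element set. -/
noncomputable def bellT (n : ℕ) : ℕ :=
  Set.ncard {P : Finset (Finset (Fin n)) | IsSetPartition P ∧ ∀ b ∈ P, 2 ≤ b.card}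

/-- `Qpart x y` is the set partition with block `{x,y}` and all other blocks singletons. -/
def Qpart {n : ℕ} (x y : Fin n) : Finset (Finset (Fin n)) :=
  insert ({x, y} : Finset (Fin n))
    (Finset.image (fun j => ({j} : Finset (Fin n))) (Finset.univ \ {x, y}))

/-- The Hilton–Milner type family `H(a_1,…,a_t,b)`. -/
def HM {n t : ℕ} (a : Fin t → Fin n) (b : Fin n) : Set (Finset (Finset (Fin n))) :=
  {P | IsSetPartition P ∧ (∀ i, ({a i} : Finset (Fin n)) ∈ P) ∧
    ∃ c : Fin n, (∀ i, c ≠ a i) ∧ c ≠ b ∧ ({c} : Finset (Fin n)) ∈ P}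
  ∪ {P | ∃ i : Fin t, P = Qpart (a i) b}

/-
A partition in the first part of `H` has all `{a i}` as blocks, so it is determined by its
restriction to the `(n - t)`-set `S = [n] \ {a_1, …, a_t}`, which contains `b`; the remaining
condition is that this restriction has a singleton block other than `{b}`. The partitions of `S`
split into those with such a singleton, the singleton-free ones (`B̃_{n-t}`), and those whose only
singleton block is `{b}`, which correspond to the singleton-free partitions of `S \ {b}`
(`B̃_{n-t-1}`). The `t` partitions `Q(a_i, b)` are distinct and have no block `{a_i}`.
-/

open Finset

lemma ncard_and_add_ncard_and_not {γ : Type*} [Finite γ] (p q : γ → Prop) :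
    {x | p x ∧ q x}.ncard + {x | p x ∧ ¬q x}.ncard = {x | p x}.ncard :=
  Set.ncard_inter_add_ncard_sdiff_eq_ncard {x | p x} {x | q x}

lemma Finset.notMem_map_of_notMem_range {α β : Type*} (f : β ↪ α) {u : Finset β} {x : α}
    (hx : x ∉ Set.range f) : x ∉ u.map f :=
  fun hxu => by
    obtain ⟨y, -, rfl⟩ := mem_map.1 hxu
    exact hx ⟨y, rfl⟩

section Partition

variable {α β : Type*} [Fintype α] [DecidableEq α] [Fintype β]

def IsPartition (P : Finset (Finset α)) : Prop :=
  (∀ s ∈ P, s.Nonempty) ∧ (∀ s ∈ P, ∀ t ∈ P, s ≠ t → Disjoint s t) ∧ P.sup id = univ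

lemma sup_id_eq_univ_iff {P : Finset (Finset α)} : P.sup id = univ ↔ ∀ x, ∃ s ∈ P, x ∈ s := by
  simp [eq_univ_iff_forall, mem_sup]

namespace IsPartition

variable {P : Finset (Finset α)}

lemma eq_singleton_of_mem (hP : IsPartition P) {s : Finset α} {x : α} (hs : s ∈ P)
    (hx : {x} ∈ P) (hxs : x ∈ s) : s = {x} := by
  by_contra hne
  exact disjoint_left.1 (hP.2.1 s hs {x} hx hne) hxs (mem_singleton_self x)

lemma forall_two_le_card_iff (hP : IsPartition P) :
    (∀ s ∈ P, 2 ≤ #s) ↔ ∀ x, {x} ∉ P := by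
  refine ⟨fun h x hx => by simpa using h _ hx, fun h s hs => ?_⟩
  obtain ⟨x, hx⟩ := hP.1 s hs
  by_contra! hlt
  obtain ⟨y, rfl⟩ := card_eq_one.1 (by have := card_pos.2 ⟨x, hx⟩; omega : #s = 1)
  exact h y hs

end IsPartition

def extendBySingletons (f : β ↪ α) (Q : Finset (Finset β)) : Finset (Finset α) :=
  Q.image (map f) ∪ (univ.map f)ᶜ.image singleton

section extendBySingletons

variable (f : β ↪ α) {Q : Finset (Finset β)}

lemma mem_extendBySingletons {s : Finset α} :
    s ∈ extendBySingletons f Q ↔ (∃ u ∈ Q, u.map f = s) ∨ ∃ x ∉ Set.range f, {x} = s := by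
  simp [extendBySingletons]

lemma map_mem_extendBySingletons {u : Finset β} : u.map f ∈ extendBySingletons f Q ↔ u ∈ Q := by
  simp only [mem_extendBySingletons, map_inj, exists_eq_right]
  exact or_iff_left fun ⟨x, hx, h⟩ => notMem_map_of_notMem_range f hx (h ▸ mem_singleton_self x)

lemma singleton_mem_extendBySingletons {x : α} (hx : x ∉ Set.range f) :
    {x} ∈ extendBySingletons f Q :=
  (mem_extendBySingletons f).2 (Or.inr ⟨x, hx, rfl⟩)

lemma extendBySingletons_injective : Function.Injective (extendBySingletons f) := fun Q R h => by
  ext u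
  rw [← map_mem_extendBySingletons f, h, map_mem_extendBySingletons]

lemma exists_extendBySingletons_eq {P : Finset (Finset α)} (hP : IsPartition P)
    (hforced : ∀ x ∉ Set.range f, {x} ∈ P) : ∃ Q, extendBySingletons f Q = P := by
  refine ⟨univ.filter (fun u => u.map f ∈ P), ?_⟩
  ext s
  rw [mem_extendBySingletons]
  constructor
  · rintro (⟨u, hu, rfl⟩ | ⟨x, hx, rfl⟩)
    · exact (mem_filter.1 hu).2
    · exact hforced x hx
  · intro hs
    by_cases h : ∃ x ∈ s, x ∉ Set.range f
    · obtain ⟨x, hxs, hx⟩ := h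
      exact Or.inr ⟨x, hx, (hP.eq_singleton_of_mem hs (hforced x hx) hxs).symm⟩
    · push Not at h
      obtain ⟨u, -, rfl⟩ := subset_map_iff.1 (fun x hx => by simpa using h x hx : s ⊆ univ.map f)
      exact Or.inl ⟨u, by simpa using hs, rfl⟩

variable [DecidableEq β]

lemma isPartition_extendBySingletons_iff :
    IsPartition (extendBySingletons f Q) ↔ IsPartition Q := by
  have disjoint_map_singleton : ∀ (u : Finset β) x, x ∉ Set.range f → Disjoint (u.map f) {x} :=
    fun _ _ hx => disjoint_singleton_right.2 (notMem_map_of_notMem_range f hx)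
  simp only [IsPartition, sup_id_eq_univ_iff]
  refine ⟨fun ⟨hne, hdisj, hcov⟩ => ⟨?_, ?_, ?_⟩, fun ⟨hne, hdisj, hcov⟩ => ⟨?_, ?_, ?_⟩⟩
  · exact fun u hu => map_nonempty.1 (hne _ ((map_mem_extendBySingletons f).2 hu))
  · intro u hu v hv huv
    exact (disjoint_map f).1 (hdisj _ ((map_mem_extendBySingletons f).2 hu) _
      ((map_mem_extendBySingletons f).2 hv) (fun h => huv (map_inj.1 h)))
  · intro y
    obtain ⟨s, hs, hys⟩ := hcov (f y)
    rcases (mem_extendBySingletons f).1 hs with ⟨u, hu, rfl⟩ | ⟨x, hx, rfl⟩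
    · exact ⟨u, hu, (mem_map' f).1 hys⟩
    · exact absurd ⟨y, mem_singleton.1 hys⟩ hx
  · intro s hs
    rcases (mem_extendBySingletons f).1 hs with ⟨u, hu, rfl⟩ | ⟨x, -, rfl⟩
    · exact (hne u hu).map
    · exact singleton_nonempty x
  · intro s hs t ht hst
    rcases (mem_extendBySingletons f).1 hs with ⟨u, hu, rfl⟩ | ⟨x, hx, rfl⟩ <;>
      rcases (mem_extendBySingletons f).1 ht with ⟨v, hv, rfl⟩ | ⟨y, hy, rfl⟩
    · exact (disjoint_map f).2 (hdisj u hu v hv (fun h => hst (h ▸ rfl)))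
    · exact disjoint_map_singleton u y hy
    · exact (disjoint_map_singleton v x hx).symm
    · exact disjoint_singleton.2 (fun h => hst (h ▸ rfl))
  · intro x
    by_cases hx : x ∈ Set.range f
    · obtain ⟨y, rfl⟩ := hx
      obtain ⟨u, hu, hyu⟩ := hcov y
      exact ⟨u.map f, (map_mem_extendBySingletons f).2 hu, mem_map_of_mem f hyu⟩
    · exact ⟨{x}, singleton_mem_extendBySingletons f hx, mem_singleton_self x⟩

theorem ncard_forcedSingletons (Φ : Finset (Finset α) → Prop) :
    {P | IsPartition P ∧ (∀ x ∉ Set.range f, {x} ∈ P) ∧ Φ P}.ncard =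
      {Q | IsPartition Q ∧ Φ (extendBySingletons f Q)}.ncard := by
  rw [← Set.ncard_image_of_injective _ (extendBySingletons_injective f)]
  congr 1
  ext P
  constructor
  · rintro ⟨hP, hforced, hΦ⟩
    obtain ⟨Q, rfl⟩ := exists_extendBySingletons_eq f hP hforced
    exact ⟨Q, ⟨(isPartition_extendBySingletons_iff f).1 hP, hΦ⟩, rfl⟩
  · rintro ⟨Q, ⟨hQ, hΦ⟩, rfl⟩
    exact ⟨(isPartition_extendBySingletons_iff f).2 hQ,
      fun x hx => singleton_mem_extendBySingletons f hx, hΦ⟩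

end extendBySingletons

variable [DecidableEq β]

theorem ncard_isPartition_eq_add (b : β) :
    {Q : Finset (Finset β) | IsPartition Q}.ncard =
      {Q | IsPartition Q ∧ ∃ c ≠ b, {c} ∈ Q}.ncard +
        ({Q | IsPartition Q ∧ {b} ∈ Q ∧ ∀ c ≠ b, {c} ∉ Q}.ncard +
          {Q : Finset (Finset β) | IsPartition Q ∧ ∀ c, {c} ∉ Q}.ncard) := by
  rw [← ncard_and_add_ncard_and_not IsPartition (fun Q => ∃ c ≠ b, {c} ∈ Q),
    ← ncard_and_add_ncard_and_not (fun Q => IsPartition Q ∧ ¬∃ c ≠ b, {c} ∈ Q) ({b} ∈ ·)]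
  congr 3 <;> ext Q <;> simp only [Set.mem_ofPred_eq, not_exists, not_and]
  · tauto
  · constructor
    · rintro ⟨⟨hQ, hne⟩, hb⟩
      exact ⟨hQ, fun c => if h : c = b then h ▸ hb else hne c h⟩
    · rintro ⟨hQ, h⟩
      exact ⟨⟨hQ, fun c _ => h c⟩, h b⟩

theorem ncard_unique_singleton_eq {γ : Type*} [Fintype γ] [DecidableEq γ] (f : γ ↪ β) {b : β}
    (hf : Set.range f = {b}ᶜ) :
    {Q | IsPartition Q ∧ {b} ∈ Q ∧ ∀ c ≠ b, {c} ∉ Q}.ncard =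
      {R : Finset (Finset γ) | IsPartition R ∧ ∀ c, {c} ∉ R}.ncard := by
  have hb : ∀ x, x ∉ Set.range f ↔ x = b := by simp [hf]
  calc _ = {Q | IsPartition Q ∧ (∀ x ∉ Set.range f, {x} ∈ Q) ∧ ∀ c ≠ b, {c} ∉ Q}.ncard := by
        simp only [hb, forall_eq]
    _ = {R | IsPartition R ∧ ∀ c ≠ b, {c} ∉ extendBySingletons f R}.ncard :=
        ncard_forcedSingletons f _
    _ = _ := by
        congr! 3 with R
        simp only [ne_eq, ← hb, not_not, Set.forall_mem_range, ← map_singleton,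
          map_mem_extendBySingletons]

end Partition

lemma Finset.exists_fin_embedding_range_eq {α : Type*} {S : Finset α} {m : ℕ} (hS : #S = m) :
    ∃ f : Fin m ↪ α, Set.range f = S :=
  ⟨(S.equivFinOfCardEq hS).symm.toEmbedding.trans (Function.Embedding.subtype _), by
    simp [Set.range_comp, Function.Embedding.coe_trans]⟩

lemma isSetPartition_iff_isPartition {n : ℕ} {P : Finset (Finset (Fin n))} :
    IsSetPartition P ↔ IsPartition P := Iff.rfl

lemma bell_eq_ncard (m : ℕ) : bell m = {Q : Finset (Finset (Fin m)) | IsPartition Q}.ncard := rfl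

lemma bellT_eq_ncard (m : ℕ) :
    bellT m = {Q : Finset (Finset (Fin m)) | IsPartition Q ∧ ∀ c, {c} ∉ Q}.ncard := by
  unfold bellT
  congr! 3 with Q
  exact and_congr_right IsPartition.forall_two_le_card_iff

theorem bell_eq_add {m : ℕ} (b : Fin m) :
    bell m = {Q | IsPartition Q ∧ ∃ c ≠ b, {c} ∈ Q}.ncard + (bellT (m - 1) + bellT m) := by
  obtain ⟨f, hf⟩ := exists_fin_embedding_range_eq (S := ({b}ᶜ : Finset (Fin m))) (m := m - 1)
    (by simp [card_compl])
  rw [bell_eq_ncard, ncard_isPartition_eq_add b, ncard_unique_singleton_eq f (by simpa using hf),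
    bellT_eq_ncard, bellT_eq_ncard]

theorem ncard_singletons_and_free_singleton_add_bellT {α ι : Type*} [Fintype α] [DecidableEq α]
    [Fintype ι] {a : ι → α} (ha : Function.Injective a) {b : α} (hab : ∀ i, a i ≠ b) :
    {P | IsPartition P ∧ (∀ i, {a i} ∈ P) ∧ ∃ c, (∀ i, c ≠ a i) ∧ c ≠ b ∧ {c} ∈ P}.ncard +
        (bellT (Fintype.card α - Fintype.card ι - 1) + bellT (Fintype.card α - Fintype.card ι)) =
      bell (Fintype.card α - Fintype.card ι) := by
  obtain ⟨f, hf⟩ := exists_fin_embedding_range_eq (S := (univ.image a)ᶜ)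
    (by rw [card_compl, card_image_of_injective _ ha, card_univ])
  have hmem : ∀ x, x ∈ Set.range f ↔ ∀ i, x ≠ a i := by
    simp [hf, eq_comm]
  obtain ⟨b, rfl⟩ := (hmem b).2 fun i => (hab i).symm
  rw [bell_eq_add b]
  congr 1
  calc _ = {P | IsPartition P ∧ (∀ x ∉ Set.range f, {x} ∈ P) ∧
        ∃ c ∈ Set.range f, c ≠ f b ∧ {c} ∈ P}.ncard := by
        simp only [hmem, not_forall, not_not, forall_exists_index, forall_comm (α := α),
          forall_eq]
    _ = {Q | IsPartition Q ∧ ∃ c ∈ Set.range f, c ≠ f b ∧ {c} ∈ extendBySingletons f Q}.ncard :=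
        ncard_forcedSingletons f _
    _ = _ := by
        congr! 3 with Q
        simp only [Set.exists_range_iff, ne_eq, f.injective.eq_iff, ← map_singleton,
          map_mem_extendBySingletons]

section Qpart

variable {n : ℕ}

lemma mem_Qpart {x y : Fin n} {s : Finset (Fin n)} :
    s ∈ Qpart x y ↔ s = {x, y} ∨ ∃ j, j ≠ x ∧ j ≠ y ∧ {j} = s := by
  simp [Qpart, and_assoc]

lemma singleton_notMem_Qpart {x y : Fin n} (hxy : x ≠ y) : {x} ∉ Qpart x y := by
  rw [mem_Qpart]
  rintro (h | ⟨j, hjx, -, hj⟩)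
  · exact hxy.symm (mem_singleton.1 (h ▸ mem_insert_of_mem (mem_singleton_self y)))
  · exact hjx (singleton_inj.1 hj)

lemma Qpart_left_inj {x x' y : Fin n} (hx : x ≠ y) : Qpart x y = Qpart x' y ↔ x = x' := by
  refine ⟨fun h => ?_, congrArg (Qpart · y)⟩
  rcases mem_Qpart.1 (h ▸ mem_insert_self _ _ : {x, y} ∈ Qpart x' y) with h | ⟨j, -, -, hj⟩
  · simpa [hx] using (h ▸ mem_insert_self x {y} : x ∈ ({x', y} : Finset (Fin n)))
  · simpa [card_pair hx] using congrArg card hj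

lemma ncard_setOf_eq_Qpart {t : ℕ} {a : Fin t → Fin n} (ha : Function.Injective a) {b : Fin n}
    (hab : ∀ i, a i ≠ b) : {P | ∃ i, P = Qpart (a i) b}.ncard = t := by
  have : {P | ∃ i, P = Qpart (a i) b} = Set.range fun i => Qpart (a i) b := by
    ext; simp [eq_comm]
  rw [this, Set.ncard_range_of_injective fun i j h => ha ((Qpart_left_inj (hab i)).1 h),
    Nat.card_eq_fintype_card, Fintype.card_fin]

end Qpart

theorem card_HM_general (n t : ℕ)
    (a : Fin t → Fin n) (b : Fin n)
    (ha : Function.Injective a) (hab : ∀ i, a i ≠ b) :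
    ((HM a b).ncard : ℤ) =
      (bell (n - t) : ℤ) - (bellT (n - t) : ℤ) - (bellT (n - t - 1) : ℤ) + (t : ℤ) := by
  have hbell := ncard_singletons_and_free_singleton_add_bellT ha hab
  simp only [Fintype.card_fin] at hbell
  rw [HM, Set.ncard_union_eq, ncard_setOf_eq_Qpart ha hab]
  · simp only [isSetPartition_iff_isPartition]
    omega
  · exact Set.disjoint_left.2 fun P ⟨_, hsing, _⟩ ⟨i, hi⟩ =>
      singleton_notMem_Qpart (hab i) (hi ▸ hsing i)

theorem card_HM (n t : ℕ) (ht : 0 < t) (hn : t + 2 ≤ n)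
    (a : Fin t → Fin n) (b : Fin n)
    (ha : Function.Injective a) (hab : ∀ i, a i ≠ b) :
    ((HM a b).ncard : ℤ) =
      (bell (n - t) : ℤ) - (bellT (n - t) : ℤ) - (bellT (n - t - 1) : ℤ) + (t : ℤ) :=
  card_HM_general n t a b ha hab
end

section
/- For each fixed positive integer t there exists N such that for all n ≥ N and all integers r with t+4 ≤ r ≤ n−2, we have t · B_{n-r+1} < B̃_{n-t-1}. -/
open Finset

variable {n : ℕ} {P P' Q : Finset (Finset (Fin n))} {a : Fin n} {b b' c : Finset (Fin n)}

def blockOf (P : Finset (Finset (Fin n))) (x : Fin n) : Finset (Fin n) :=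
  (P.filter (x ∈ ·)).sup id

def mergeBlocks (P Q : Finset (Finset (Fin n))) : Finset (Finset (Fin n)) :=
  insert (Q.sup id) (P \ Q)

def shatter (P : Finset (Finset (Fin n))) (b : Finset (Fin n)) : Finset (Finset (Fin n)) :=
  P.erase b ∪ b.image singleton

def gatherSingletons (P : Finset (Finset (Fin n))) : Finset (Finset (Fin n)) :=
  mergeBlocks P (P.filter (·.card = 1))

def liftPartition (P : Finset (Finset (Fin n))) : Finset (Finset (Fin (n + 1))) :=
  insert {Fin.last n} (P.image (map Fin.castSuccEmb))

namespace IsSetPartition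

theorem exists_mem (hP : IsSetPartition P) (x : Fin n) : ∃ b ∈ P, x ∈ b := by
  simpa using mem_sup.1 (hP.2.2.symm ▸ mem_univ x : x ∈ P.sup id)

theorem eq_of_mem_of_mem (hP : IsSetPartition P) (hb : b ∈ P) (hc : c ∈ P) {x : Fin n}
    (hxb : x ∈ b) (hxc : x ∈ c) : b = c := by
  by_contra hne
  exact disjoint_left.1 (hP.2.1 b hb c hc hne) hxb hxc

theorem blockOf_eq (hP : IsSetPartition P) (hb : b ∈ P) {x : Fin n} (hx : x ∈ b) :
    blockOf P x = b := by
  have : P.filter (x ∈ ·) = {b} := by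
    ext c
    simp only [mem_filter, mem_singleton]
    exact ⟨fun ⟨hc, hxc⟩ => hP.eq_of_mem_of_mem hc hb hxc hx, fun h => ⟨h ▸ hb, h ▸ hx⟩⟩
  rw [blockOf, this, sup_singleton, id]

theorem blockOf_mem (hP : IsSetPartition P) (x : Fin n) : blockOf P x ∈ P := by
  obtain ⟨b, hb, hx⟩ := hP.exists_mem x
  rwa [hP.blockOf_eq hb hx]

theorem mem_blockOf (hP : IsSetPartition P) (x : Fin n) : x ∈ blockOf P x := by
  obtain ⟨b, hb, hx⟩ := hP.exists_mem x
  rwa [hP.blockOf_eq hb hx]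

theorem notMem_of_mem_erase_singleton (hP : IsSetPartition P) (ha : {a} ∈ P)
    (hb : b ∈ P.erase {a}) : a ∉ b := fun hab =>
  (mem_erase.1 hb).1 (hP.eq_of_mem_of_mem (mem_erase.1 hb).2 ha hab (mem_singleton_self a))

theorem sup_notMem_sdiff (hP : IsSetPartition P) (hQP : Q ⊆ P) (hQ : Q.Nonempty) :
    Q.sup id ∉ P \ Q := by
  intro hS
  obtain ⟨q, hq⟩ := hQ
  obtain ⟨x, hx⟩ := hP.1 q (hQP hq)
  have hqS : q = Q.sup id :=
    hP.eq_of_mem_of_mem (hQP hq) (mem_sdiff.1 hS).1 hx (le_sup (f := id) hq hx)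
  exact (mem_sdiff.1 hS).2 (hqS ▸ hq)

theorem erase_mergeBlocks (hP : IsSetPartition P) (hQP : Q ⊆ P) (hQ : Q.Nonempty) :
    (mergeBlocks P Q).erase (Q.sup id) = P \ Q :=
  erase_insert (hP.sup_notMem_sdiff hQP hQ)

end IsSetPartition

theorem isSetPartition_mergeBlocks (hP : IsSetPartition P) (hQP : Q ⊆ P) (hQ : Q.Nonempty) :
    IsSetPartition (mergeBlocks P Q) := by
  obtain ⟨hne, hdisj, hcover⟩ := hP
  have hsup : ∀ c ∈ P \ Q, Disjoint (Q.sup id) c := fun c hc =>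
    Finset.disjoint_sup_left.2 fun q hq =>
      hdisj q (hQP hq) c (mem_sdiff.1 hc).1 fun hqc => (mem_sdiff.1 hc).2 (hqc ▸ hq)
  refine ⟨?_, ?_, ?_⟩
  · simp only [mergeBlocks, forall_mem_insert]
    obtain ⟨q, hq⟩ := hQ
    exact ⟨(hne q (hQP hq)).mono (le_sup (f := id) hq), fun c hc => hne c (mem_sdiff.1 hc).1⟩
  · intro b hb c hc hbc
    rcases mem_insert.1 hb with rfl | hb <;> rcases mem_insert.1 hc with rfl | hc
    · exact absurd rfl hbc
    · exact hsup c hc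
    · exact (hsup b hb).symm
    · exact hdisj b (mem_sdiff.1 hb).1 c (mem_sdiff.1 hc).1 hbc
  · rw [mergeBlocks, sup_insert, id, ← sup_union, union_sdiff_of_subset hQP, hcover]

theorem isSetPartition_shatter (hP : IsSetPartition P) (hb : b ∈ P) :
    IsSetPartition (shatter P b) := by
  refine ⟨?_, ?_, ?_⟩
  · simp only [shatter, mem_union, mem_erase, mem_image]
    rintro c (⟨-, hc⟩ | ⟨x, -, rfl⟩)
    exacts [hP.1 c hc, singleton_nonempty x]
  · simp only [shatter, mem_union, mem_erase, mem_image]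
    rintro c (⟨hcb, hc⟩ | ⟨x, hx, rfl⟩) d (⟨hdb, hd⟩ | ⟨y, hy, rfl⟩) hcd
    · exact hP.2.1 c hc d hd hcd
    · exact disjoint_singleton_right.2 fun hyc => hcb (hP.eq_of_mem_of_mem hc hb hyc hy)
    · exact disjoint_singleton_left.2 fun hxd => hdb (hP.eq_of_mem_of_mem hd hb hxd hx)
    · exact disjoint_singleton.2 fun hxy => hcd (hxy ▸ rfl)
  · refine eq_univ_of_forall fun x => mem_sup.2 ?_
    obtain ⟨c, hc, hxc⟩ := hP.exists_mem x
    by_cases hcb : c = b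
    · exact ⟨{x}, mem_union_right _ (mem_image_of_mem _ (hcb ▸ hxc)), mem_singleton_self x⟩
    · exact ⟨c, mem_union_left _ (mem_erase.2 ⟨hcb, hc⟩), hxc⟩

theorem isSetPartition_gatherSingletons (hP : IsSetPartition P) (ha : {a} ∈ P) :
    IsSetPartition (gatherSingletons P) :=
  isSetPartition_mergeBlocks hP (filter_subset _ _) ⟨{a}, mem_filter.2 ⟨ha, card_singleton a⟩⟩

theorem image_singleton_sup_id (hQ : ∀ q ∈ Q, q.card = 1) : (Q.sup id).image singleton = Q := by
  ext c
  simp only [mem_image, mem_sup, id]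
  constructor
  · rintro ⟨x, ⟨q, hq, hxq⟩, rfl⟩
    obtain ⟨y, rfl⟩ := card_eq_one.1 (hQ q hq)
    rwa [mem_singleton.1 hxq]
  · intro hc
    obtain ⟨y, rfl⟩ := card_eq_one.1 (hQ c hc)
    exact ⟨y, ⟨{y}, hc, mem_singleton_self y⟩, rfl⟩

theorem gatherSingletons_shatter (hP : ∀ c ∈ P, 2 ≤ c.card) (hb : b ∈ P) :
    gatherSingletons (shatter P b) = P := by
  have hsing : (shatter P b).filter (·.card = 1) = b.image singleton := by
    ext c
    simp only [shatter, mem_filter, mem_union, mem_erase, mem_image]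
    constructor
    · rintro ⟨⟨-, hc⟩ | hc, hc1⟩
      · exact absurd (hP c hc) (by omega)
      · exact hc
    · rintro ⟨x, hx, rfl⟩
      exact ⟨Or.inr ⟨x, hx, rfl⟩, card_singleton x⟩
  have hdisj : Disjoint (P.erase b) (b.image singleton) := by
    refine disjoint_left.2 fun c hc hc' => ?_
    obtain ⟨x, -, rfl⟩ := mem_image.1 hc'
    exact absurd (hP _ (mem_of_mem_erase hc)) (by simp)
  have hsup : (b.image singleton).sup id = b := by
    ext x
    simp
  rw [gatherSingletons, hsing, mergeBlocks, hsup, shatter, union_sdiff_cancel_right hdisj,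
    insert_erase hb]

theorem IsSetPartition.shatter_gatherSingletons (hP : IsSetPartition P) (ha : {a} ∈ P) :
    shatter (gatherSingletons P) (blockOf (gatherSingletons P) a) = P := by
  set Q := P.filter (·.card = 1)
  have haQ : {a} ∈ Q := mem_filter.2 ⟨ha, card_singleton a⟩
  have hblock : blockOf (gatherSingletons P) a = Q.sup id :=
    (isSetPartition_gatherSingletons hP ha).blockOf_eq (mem_insert_self _ _)
      (le_sup (f := id) haQ (mem_singleton_self a))
  rw [hblock, shatter, gatherSingletons, hP.erase_mergeBlocks (filter_subset _ _) ⟨_, haQ⟩,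
    image_singleton_sup_id fun q hq => (mem_filter.1 hq).2,
    sdiff_union_of_subset (filter_subset _ _)]

theorem IsSetPartition.two_le_card_of_mem_gatherSingletons (hP : IsSetPartition P) {a' : Fin n}
    (ha : {a} ∈ P) (ha' : {a'} ∈ P) (haa' : a ≠ a') : ∀ b ∈ gatherSingletons P, 2 ≤ b.card := by
  intro b hb
  rcases mem_insert.1 hb with rfl | hb
  · have hmem : ∀ x, {x} ∈ P → x ∈ (P.filter (·.card = 1)).sup id := fun x hx =>
      le_sup (f := id) (mem_filter.2 ⟨hx, card_singleton x⟩) (mem_singleton_self x)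
    exact one_lt_card.2 ⟨a, hmem a ha, a', hmem a' ha', haa'⟩
  · obtain ⟨hbP, hb1⟩ := mem_sdiff.1 hb
    have := (hP.1 b hbP).card_pos
    have : b.card ≠ 1 := fun h => hb1 (mem_filter.2 ⟨hbP, h⟩)
    omega

theorem sup_id_pair (a : Fin n) (b : Finset (Fin n)) :
    ({{a}, b} : Finset (Finset (Fin n))).sup id = insert a b := by
  rw [sup_insert, sup_singleton, insert_eq]
  rfl

theorem pair_subset_of_mem_erase (ha : {a} ∈ P) (hb : b ∈ P.erase {a}) : {{a}, b} ⊆ P :=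
  insert_subset ha (singleton_subset_iff.2 (mem_of_mem_erase hb))

theorem IsSetPartition.singleton_notMem_mergeBlocks_pair (hP : IsSetPartition P) (ha : {a} ∈ P)
    (hb : b ∈ P.erase {a}) : {a} ∉ mergeBlocks P {{a}, b} := by
  rw [mergeBlocks, sup_id_pair, mem_insert, not_or]
  refine ⟨fun h => ?_, fun h => (mem_sdiff.1 h).2 (mem_insert_self _ _)⟩
  obtain ⟨x, hx⟩ := hP.1 b (mem_of_mem_erase hb)
  have hxa : x = a := mem_singleton.1 (h ▸ mem_insert_of_mem hx)
  exact hP.notMem_of_mem_erase_singleton ha hb (hxa ▸ hx)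

theorem IsSetPartition.mergeBlocks_pair_inj (hP : IsSetPartition P) (hP' : IsSetPartition P')
    (ha : {a} ∈ P) (ha' : {a} ∈ P') (hb : b ∈ P.erase {a}) (hb' : b' ∈ P'.erase {a})
    (h : mergeBlocks P {{a}, b} = mergeBlocks P' {{a}, b'}) : P = P' ∧ b = b' := by
  have hR := isSetPartition_mergeBlocks hP (pair_subset_of_mem_erase ha hb) (insert_nonempty _ _)
  have hS : insert a b = insert a b' := by
    rw [← sup_id_pair, ← sup_id_pair]
    refine hR.eq_of_mem_of_mem (x := a) (mem_insert_self _ _) (h ▸ mem_insert_self _ _) ?_ ?_ <;>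
      simp
  have hbb' : b = b' := by
    rw [← erase_insert (hP.notMem_of_mem_erase_singleton ha hb), hS,
      erase_insert (hP'.notMem_of_mem_erase_singleton ha' hb')]
  subst hbb'
  have hrest := congrArg (erase · (({{a}, b} : Finset (Finset (Fin n))).sup id)) h
  simp only [hP.erase_mergeBlocks (pair_subset_of_mem_erase ha hb) (insert_nonempty _ _),
    hP'.erase_mergeBlocks (pair_subset_of_mem_erase ha' hb') (insert_nonempty _ _)] at hrest
  rw [← sdiff_union_of_subset (pair_subset_of_mem_erase ha hb), hrest,
    sdiff_union_of_subset (pair_subset_of_mem_erase ha' hb')]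
  exact ⟨rfl, rfl⟩

theorem last_notMem_map_castSuccEmb (b : Finset (Fin n)) :
    Fin.last n ∉ b.map Fin.castSuccEmb := by
  simp [Fin.castSucc_ne_last]

theorem isSetPartition_liftPartition (hP : IsSetPartition P) :
    IsSetPartition (liftPartition P) := by
  refine ⟨?_, ?_, ?_⟩
  · simp only [liftPartition, forall_mem_insert, forall_mem_image]
    exact ⟨singleton_nonempty _, fun b hb => (hP.1 b hb).map⟩
  · simp only [liftPartition, mem_insert, mem_image]
    rintro _ (rfl | ⟨b, hb, rfl⟩) _ (rfl | ⟨c, hc, rfl⟩) hbc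
    · exact absurd rfl hbc
    · exact disjoint_singleton_left.2 (last_notMem_map_castSuccEmb c)
    · exact disjoint_singleton_right.2 (last_notMem_map_castSuccEmb b)
    · exact disjoint_map _ |>.2 (hP.2.1 b hb c hc fun h => hbc (h ▸ rfl))
  · refine eq_univ_of_forall fun x => mem_sup.2 ?_
    induction x using Fin.lastCases with
    | last => exact ⟨_, mem_insert_self _ _, mem_singleton_self _⟩
    | cast y =>
      obtain ⟨b, hb, hyb⟩ := hP.exists_mem y
      exact ⟨_, mem_insert_of_mem (mem_image_of_mem _ hb), mem_map_of_mem _ hyb⟩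

theorem liftPartition_injective : Function.Injective (liftPartition (n := n)) := by
  intro P Q h
  have hlast : ∀ R : Finset (Finset (Fin n)), {Fin.last n} ∉ R.image (map Fin.castSuccEmb) := by
    simp only [mem_image, not_exists, not_and]
    exact fun R b _ hb => last_notMem_map_castSuccEmb b (hb ▸ mem_singleton_self _)
  have := congrArg (erase · {Fin.last n}) h
  simp only [liftPartition, erase_insert (hlast _)] at this
  exact image_injective (map_injective _) this

theorem singleton_castSucc_mem_liftPartition {x : Fin n} (hx : {x} ∈ P) :
    {Fin.castSucc x} ∈ liftPartition P :=
  mem_insert_of_mem (by simpa using mem_image_of_mem (map Fin.castSuccEmb) hx)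

section FiberPartition

variable {β : Type*} [DecidableEq β]

def fiberPartition (f : Fin n → β) : Finset (Finset (Fin n)) :=
  univ.image fun x => univ.filter fun y => f y = f x

theorem isSetPartition_fiberPartition (f : Fin n → β) : IsSetPartition (fiberPartition f) := by
  refine ⟨?_, ?_, ?_⟩
  · simp only [fiberPartition, forall_mem_image]
    exact fun x _ => ⟨x, by simp⟩
  · simp only [fiberPartition, mem_image]
    rintro _ ⟨x, -, rfl⟩ _ ⟨y, -, rfl⟩ hxy
    refine disjoint_filter.2 fun z _ hzx hzy => hxy ?_
    rw [← hzx, hzy]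
  · exact eq_univ_of_forall fun x =>
      mem_sup.2 ⟨_, mem_image_of_mem _ (mem_univ x), by simp⟩

theorem apply_eq_apply_of_fiberPartition_eq {f g : Fin n → β}
    (h : fiberPartition f = fiberPartition g) {x y : Fin n} (hxy : f x = f y) : g x = g y := by
  have hmem : univ.filter (fun z => f z = f x) ∈ fiberPartition g :=
    h ▸ mem_image_of_mem _ (mem_univ x)
  obtain ⟨z, -, hz⟩ := mem_image.1 hmem
  have hx : x ∈ univ.filter fun w => g w = g z := hz ▸ by simp
  have hy : y ∈ univ.filter fun w => g w = g z := hz ▸ by simp [hxy]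
  exact (mem_filter.1 hx).2.trans (mem_filter.1 hy).2.symm

end FiberPartition

theorem IsSetPartition.exists_fiberPartition_eq (hP : IsSetPartition P) {C : ℕ}
    (hC : P.card ≤ C) : ∃ f : Fin n → Fin C, fiberPartition f = P := by
  set f : Fin n → Fin C := fun x => Fin.castLE hC (P.equivFin ⟨blockOf P x, hP.blockOf_mem x⟩)
  have hf : ∀ x y, f y = f x ↔ y ∈ blockOf P x := by
    intro x y
    simp only [f, Fin.castLE_inj, P.equivFin.apply_eq_iff_eq, Subtype.mk.injEq]
    exact ⟨fun h => h ▸ hP.mem_blockOf y, fun h => hP.blockOf_eq (hP.blockOf_mem x) h⟩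
  refine ⟨f, ?_⟩
  ext b
  simp only [fiberPartition, mem_image, mem_univ, true_and, filter_congr fun y _ => hf _ y,
    filter_mem_eq_inter, univ_inter]
  exact ⟨fun ⟨x, hx⟩ => hx ▸ hP.blockOf_mem x, fun hb =>
    let ⟨x, hx⟩ := hP.1 b hb; ⟨x, hP.blockOf_eq hb hx⟩⟩

theorem ncard_setOf_card_le_le_pow (n C : ℕ) :
    {P : Finset (Finset (Fin n)) | IsSetPartition P ∧ P.card ≤ C}.ncard ≤ C ^ n := by
  calc _ ≤ (fiberPartition '' (Set.univ : Set (Fin n → Fin C))).ncard :=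
        Set.ncard_le_ncard fun P hP =>
          let ⟨f, hf⟩ := hP.1.exists_fiberPartition_eq hP.2; ⟨f, trivial, hf⟩
    _ ≤ (Set.univ : Set (Fin n → Fin C)).ncard := Set.ncard_image_le
    _ = C ^ n := by simp [Set.ncard_univ]

theorem factorial_le_bell (j : ℕ) : j.factorial ≤ bell (j + j) := by
  -- the perfect matching pairing `i` with `j + σ i`
  let matching (σ : Equiv.Perm (Fin j)) : Fin (j + j) → Fin j := Fin.append id σ.symm
  calc j.factorial = (Set.univ : Set (Equiv.Perm (Fin j))).ncard := by
        rw [Set.ncard_univ, Nat.card_eq_fintype_card, Fintype.card_perm, Fintype.card_fin]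
    _ ≤ bell (j + j) := by
      refine Set.ncard_le_ncard_of_injOn (fun σ => fiberPartition (matching σ))
        (fun σ _ => isSetPartition_fiberPartition _) (fun σ _ τ _ h => Equiv.ext fun i => ?_)
      have := apply_eq_apply_of_fiberPartition_eq h (x := Fin.castAdd j i)
        (y := Fin.natAdd j (σ i))
        (by simp only [matching, Fin.append_left, Fin.append_right, id, Equiv.symm_apply_apply])
      simp only [matching, Fin.append_left, Fin.append_right, id] at this
      exact ((Equiv.eq_symm_apply τ).1 this).symm

def setPartitions (n : ℕ) : Set (Finset (Finset (Fin n))) :=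
  {P | IsSetPartition P}

def singletonFreePartitions (n : ℕ) : Set (Finset (Finset (Fin n))) :=
  {P | IsSetPartition P ∧ ∀ b ∈ P, 2 ≤ b.card}

def lastSingletonPartitions (n : ℕ) : Set (Finset (Finset (Fin (n + 1)))) :=
  {P | IsSetPartition P ∧ {Fin.last n} ∈ P}

theorem bell_eq_ncard_s16 (n : ℕ) : bell n = (setPartitions n).ncard := rfl

theorem bellT_eq_ncard_s16 (n : ℕ) : bellT n = (singletonFreePartitions n).ncard := rfl

theorem bell_le_ncard_lastSingletonPartitions (n : ℕ) :
    bell n ≤ (lastSingletonPartitions n).ncard :=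
  Set.ncard_le_ncard_of_injOn liftPartition
    (fun _ hP => ⟨isSetPartition_liftPartition hP, mem_insert_self _ _⟩)
    liftPartition_injective.injOn

theorem bell_monotone : Monotone bell :=
  monotone_nat_of_le_succ fun n => (bell_le_ncard_lastSingletonPartitions n).trans
    (Set.ncard_le_ncard fun _ hP => hP.1)

theorem bellT_succ_le_ncard_lastSingletonPartitions (n : ℕ) :
    bellT (n + 1) ≤ (lastSingletonPartitions n).ncard :=
  Set.ncard_le_ncard_of_injOn (fun R => shatter R (blockOf R (Fin.last n)))
    (fun _ hR => ⟨isSetPartition_shatter hR.1 (hR.1.blockOf_mem _),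
      mem_union_right _ (mem_image_of_mem _ (hR.1.mem_blockOf _))⟩)
    (Set.LeftInvOn.injOn (f₁' := gatherSingletons) fun _ hR =>
      gatherSingletons_shatter hR.2 (hR.1.blockOf_mem _))

theorem bell_le_bellT_add_bellT_succ (n : ℕ) : bell n ≤ bellT n + bellT (n + 1) := by
  have hsplit := Set.ncard_sdiff_add_ncard_of_subset
    (show singletonFreePartitions n ⊆ setPartitions n from fun _ hP => hP.1)
  suffices (setPartitions n \ singletonFreePartitions n).ncard ≤ bellT (n + 1) by
    rw [bell_eq_ncard_s16, bellT_eq_ncard_s16 n]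
    omega
  refine Set.ncard_le_ncard_of_injOn (fun P => gatherSingletons (liftPartition P)) ?_ ?_
  · rintro P ⟨hP, hP2⟩
    obtain ⟨b, hb, hb2⟩ : ∃ b ∈ P, b.card < 2 := by
      have hP2 : ¬ ∀ b ∈ P, 2 ≤ b.card := fun h => hP2 ⟨hP, h⟩
      simpa only [not_forall, not_le, exists_prop] using hP2
    obtain ⟨x, rfl⟩ := card_eq_one.1 (show b.card = 1 by have := (hP.1 b hb).card_pos; omega)
    have hlift := isSetPartition_liftPartition hP
    exact ⟨isSetPartition_gatherSingletons hlift (mem_insert_self _ _),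
      hlift.two_le_card_of_mem_gatherSingletons (mem_insert_self _ _)
        (singleton_castSucc_mem_liftPartition hb) (Fin.castSucc_ne_last x).symm⟩
  · intro P hP Q hQ h
    apply liftPartition_injective
    rw [← (isSetPartition_liftPartition hP.1).shatter_gatherSingletons (mem_insert_self _ _),
      ← (isSetPartition_liftPartition hQ.1).shatter_gatherSingletons (mem_insert_self _ _)]
    exact congrArg (fun R => shatter R (blockOf R (Fin.last n))) h

theorem mul_ncard_le_ncard_sdiff_lastSingletonPartitions (n C : ℕ) :
    C * {P ∈ lastSingletonPartitions n | C < P.card}.ncard ≤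
      (setPartitions (n + 1) \ lastSingletonPartitions n).ncard := by
  set S := {P ∈ lastSingletonPartitions n | C < P.card}
  have hS := Set.toFinite S
  set D := hS.toFinset.sigma fun P => P.erase {Fin.last n}
  have hD : C * S.ncard ≤ D.card := by
    rw [card_sigma, Set.ncard_eq_toFinset_card S hS, mul_comm, ← smul_eq_mul, ← sum_const]
    refine sum_le_sum fun P hP => ?_
    obtain ⟨⟨-, hlast⟩, hC⟩ := hS.mem_toFinset.1 hP
    rw [card_erase_of_mem hlast]
    omega
  refine hD.trans ((Set.ncard_coe_finset D).symm.trans_le (Set.ncard_le_ncard_of_injOn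
    (fun p => mergeBlocks p.1 {{Fin.last n}, p.2}) ?_ ?_))
  · rintro ⟨P, b⟩ hPb
    obtain ⟨hP, hb⟩ := mem_sigma.1 hPb
    obtain ⟨⟨hP, hlast⟩, -⟩ := hS.mem_toFinset.1 hP
    exact ⟨isSetPartition_mergeBlocks hP (pair_subset_of_mem_erase hlast hb)
        (insert_nonempty _ _), fun h => hP.singleton_notMem_mergeBlocks_pair hlast hb h.2⟩
  · rintro ⟨P, b⟩ hPb ⟨P', b'⟩ hPb' h
    obtain ⟨hP, hb⟩ := mem_sigma.1 hPb
    obtain ⟨hP', hb'⟩ := mem_sigma.1 hPb'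
    obtain ⟨⟨hP, hlast⟩, -⟩ := hS.mem_toFinset.1 hP
    obtain ⟨⟨hP', hlast'⟩, -⟩ := hS.mem_toFinset.1 hP'
    obtain ⟨rfl, rfl⟩ := hP.mergeBlocks_pair_inj hP' hlast hlast' hb hb' h
    rfl

theorem mul_ncard_le_bellT_add_two (n C : ℕ) :
    C * {P ∈ lastSingletonPartitions n | C < P.card}.ncard ≤ bellT (n + 2) := by
  have hsplit := Set.ncard_sdiff_add_ncard_of_subset
    (show lastSingletonPartitions n ⊆ setPartitions (n + 1) from fun _ hP => hP.1)
  have hmerge := mul_ncard_le_ncard_sdiff_lastSingletonPartitions n C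
  have hbell : bell (n + 1) ≤ bellT (n + 1) + bellT (n + 2) := bell_le_bellT_add_bellT_succ (n + 1)
  have hshatter := bellT_succ_le_ncard_lastSingletonPartitions n
  rw [bell_eq_ncard_s16] at hbell
  omega

theorem ncard_lastSingletonPartitions_le (n C : ℕ) :
    (lastSingletonPartitions n).ncard ≤
      {P ∈ lastSingletonPartitions n | C < P.card}.ncard + C ^ (n + 1) :=
  calc (lastSingletonPartitions n).ncard
      ≤ ({P ∈ lastSingletonPartitions n | C < P.card} ∪
          {P | IsSetPartition P ∧ P.card ≤ C}).ncard :=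
        Set.ncard_le_ncard fun P hP =>
          (le_or_gt P.card C).elim (fun h => Or.inr ⟨hP.1, h⟩) fun h => Or.inl ⟨hP, h⟩
    _ ≤ _ := Set.ncard_union_le _ _
    _ ≤ _ := Nat.add_le_add_left (ncard_setOf_card_le_le_pow _ _) _

theorem eventually_mul_pow_lt_bell (a C : ℕ) : ∀ᶠ k in Filter.atTop, a * C ^ k < bell k := by
  filter_upwards [(Nat.tendsto_div_const_atTop two_ne_zero).eventually
    (Nat.eventually_mul_pow_lt_factorial_sub (a * (C + 1)) ((C + 1) ^ 2) 0)] with k hk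
  calc a * C ^ k ≤ a * (C + 1) ^ (2 * (k / 2) + 1) :=
        Nat.mul_le_mul_left _ ((Nat.pow_le_pow_left (by omega) k).trans
          (Nat.pow_le_pow_right (by omega) (by omega)))
    _ = a * (C + 1) * ((C + 1) ^ 2) ^ (k / 2) := by rw [pow_succ', pow_mul, mul_assoc]
    _ < (k / 2).factorial := by simpa using hk
    _ ≤ bell (k / 2 + k / 2) := factorial_le_bell _
    _ ≤ bell k := bell_monotone (by omega)

theorem eventually_mul_bell_lt_bellT_add_two {t : ℕ} (ht : 0 < t) :
    ∀ᶠ k in Filter.atTop, t * bell k < bellT (k + 2) := by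
  filter_upwards [eventually_mul_pow_lt_bell (2 * (2 * t)) (2 * t)] with k hk
  have hbell := bell_le_ncard_lastSingletonPartitions k
  have hmany := mul_ncard_le_bellT_add_two k (2 * t)
  have hfew := ncard_lastSingletonPartitions_le k (2 * t)
  generalize {P ∈ lastSingletonPartitions k | 2 * t < P.card}.ncard = M at hmany hfew
  rw [mul_assoc, ← pow_succ'] at hk
  calc t * bell k ≤ t * (lastSingletonPartitions k).ncard := Nat.mul_le_mul_left t hbell
    _ < t * (2 * M) := Nat.mul_lt_mul_of_pos_left (by omega) ht
    _ = 2 * t * M := by ring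
    _ ≤ bellT (k + 2) := hmany

theorem mul_bell_lt_bellT (t : ℕ) (ht : 0 < t) :
    ∃ N : ℕ, ∀ n ≥ N, ∀ r : ℕ, t + 4 ≤ r → r ≤ n - 2 →
      t * bell (n - r + 1) < bellT (n - t - 1) := by
  obtain ⟨M, hM⟩ := (eventually_mul_bell_lt_bellT_add_two ht).exists_forall_of_atTop
  refine ⟨M + t + 3, fun n hn r hr hrn => ?_⟩
  have hk : n - t - 1 = n - t - 3 + 2 := by omega
  calc t * bell (n - r + 1) ≤ t * bell (n - t - 3) :=
        Nat.mul_le_mul_left t (bell_monotone (by omega))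
    _ < bellT (n - t - 1) := hk ▸ hM _ (by omega)
end
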